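/- arXiv:1611.01516 — 2 statements merged into one kernel-verified Lean document; each statement's English description precedes it below -/
import Mathlib

section
/- Let k ≥ 3 be an odd integer. The four-qudit state ψ ∈ (ℂ^k)^{⊗4} with coefficients ψ(i,j,l,m) = k^{-1} δ_{l,i+2j} δ_{m,i+j} (indices in ℤ/kℤ) is a perfect tensor (absolutely maximally entangled): it has unit norm, and for every 2-element subset P of the four tensor factors, the reduced density matrix on P is maximally mixed, i.e. the matrix with entries Σ_{(complementary indices)} ψ(·) · conj(ψ(·)) (the two indices in P free on the two sides, the two complementary indices summed) equals k^{-2} times the identity on ℂ^k ⊗ ℂ^k. -/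
open Finset

/-- Let `k ≥ 3` be odd. The four-qudit state `ψ ∈ (ℂ^k)^{⊗4}` with
coefficients `ψ(i,j,l,m) = k⁻¹ δ_{l,i+2j} δ_{m,i+j}` (indices in `ZMod k`) is a perfect
tensor: it has unit norm, and for each of the six 2-element subsets of the four tensor
factors the reduced density matrix (obtained by summing out the complementary pair of
indices) equals `k⁻²` times the identity on `ℂ^k ⊗ ℂ^k`. -/
theorem stmt6 (k : ℕ) [NeZero k] (hk : 3 ≤ k) (hodd : Odd k)
    (ψ : ZMod k → ZMod k → ZMod k → ZMod k → ℂ)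
    (hψ : ∀ i j l m, ψ i j l m = if l = i + 2 * j ∧ m = i + j then ((k : ℂ))⁻¹ else 0) :
    (∑ i, ∑ j, ∑ l, ∑ m, ψ i j l m * (starRingEnd ℂ) (ψ i j l m) = 1) ∧
    -- subsystem {1,2}
    (∀ i j i' j', ∑ l, ∑ m, ψ i j l m * (starRingEnd ℂ) (ψ i' j' l m) =
      if i = i' ∧ j = j' then (((k : ℂ)) ^ 2)⁻¹ else 0) ∧
    -- subsystem {1,3}
    (∀ i l i' l', ∑ j, ∑ m, ψ i j l m * (starRingEnd ℂ) (ψ i' j l' m) =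
      if i = i' ∧ l = l' then (((k : ℂ)) ^ 2)⁻¹ else 0) ∧
    -- subsystem {1,4}
    (∀ i m i' m', ∑ j, ∑ l, ψ i j l m * (starRingEnd ℂ) (ψ i' j l m') =
      if i = i' ∧ m = m' then (((k : ℂ)) ^ 2)⁻¹ else 0) ∧
    -- subsystem {2,3}
    (∀ j l j' l', ∑ i, ∑ m, ψ i j l m * (starRingEnd ℂ) (ψ i j' l' m) =
      if j = j' ∧ l = l' then (((k : ℂ)) ^ 2)⁻¹ else 0) ∧
    -- subsystem {2,4}
    (∀ j m j' m', ∑ i, ∑ l, ψ i j l m * (starRingEnd ℂ) (ψ i j' l m') =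
      if j = j' ∧ m = m' then (((k : ℂ)) ^ 2)⁻¹ else 0) ∧
    -- subsystem {3,4}
    (∀ l m l' m', ∑ i, ∑ j, ψ i j l m * (starRingEnd ℂ) (ψ i j l' m') =
      if l = l' ∧ m = m' then (((k : ℂ)) ^ 2)⁻¹ else 0) := by
  have hcop : Nat.Coprime 2 k := Nat.coprime_two_left.mpr hodd
  set t : ZMod k := (2 : ZMod k)⁻¹ with ht
  have h2t : (2 : ZMod k) * t = 1 := by
    apply ZMod.mul_inv_of_unit
    exact (ZMod.isUnit_iff_coprime 2 k).mpr (by simpa using hcop)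
  have htwo : ∀ a b : ZMod k, 2 * a = 2 * b → a = b := by
    intro a b h
    calc a = t * 2 * a := by rw [mul_comm t 2, h2t, one_mul]
    _ = t * 2 * b := by rw [mul_assoc, h, ← mul_assoc]
    _ = b := by rw [mul_comm t 2, h2t, one_mul]
  have hkC : (k : ℂ) ≠ 0 := Nat.cast_ne_zero.mpr (NeZero.ne k)
  have hval : ((k:ℂ))⁻¹ * ((k:ℂ))⁻¹ = (((k:ℂ))^2)⁻¹ := by rw [sq, mul_inv]
  -- solved forms of the condition, for each choice of summed pair
  have hB : ∀ i j l m : ZMod k,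
      ψ i j l m = if j = t * (l - i) ∧ m = i + j then ((k : ℂ))⁻¹ else 0 := by
    intro i j l m; rw [hψ]
    have key : (l = i + 2 * j ∧ m = i + j) ↔ (j = t * (l - i) ∧ m = i + j) := by
      constructor <;> rintro ⟨rfl, rfl⟩
      · exact ⟨by linear_combination (-j) * h2t, by ring⟩
      · exact ⟨by linear_combination (i - l) * h2t, by ring⟩
    simp only [key]
  have hC : ∀ i j l m : ZMod k,
      ψ i j l m = if j = m - i ∧ l = 2 * m - i then ((k : ℂ))⁻¹ else 0 := by
    intro i j l m; rw [hψ]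
    have key : (l = i + 2 * j ∧ m = i + j) ↔ (j = m - i ∧ l = 2 * m - i) := by
      constructor <;> rintro ⟨rfl, rfl⟩ <;> exact ⟨by ring, by ring⟩
    simp only [key]
  have hD : ∀ i j l m : ZMod k,
      ψ i j l m = if i = l - 2 * j ∧ m = l - j then ((k : ℂ))⁻¹ else 0 := by
    intro i j l m; rw [hψ]
    have key : (l = i + 2 * j ∧ m = i + j) ↔ (i = l - 2 * j ∧ m = l - j) := by
      constructor <;> rintro ⟨rfl, rfl⟩ <;> exact ⟨by ring, by ring⟩
    simp only [key]
  have hE : ∀ i j l m : ZMod k,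
      ψ i j l m = if i = m - j ∧ l = m + j then ((k : ℂ))⁻¹ else 0 := by
    intro i j l m; rw [hψ]
    have key : (l = i + 2 * j ∧ m = i + j) ↔ (i = m - j ∧ l = m + j) := by
      constructor <;> rintro ⟨rfl, rfl⟩ <;> exact ⟨by ring, by ring⟩
    simp only [key]
  have hF : ∀ i j l m : ZMod k,
      ψ i j l m = if i = 2 * m - l ∧ j = l - m then ((k : ℂ))⁻¹ else 0 := by
    intro i j l m; rw [hψ]
    have key : (l = i + 2 * j ∧ m = i + j) ↔ (i = 2 * m - l ∧ j = l - m) := by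
      constructor <;> rintro ⟨rfl, rfl⟩ <;> exact ⟨by ring, by ring⟩
    simp only [key]
  refine ⟨?_, ?_, ?_, ?_, ?_, ?_, ?_⟩
  · -- norm
    simp only [hψ, apply_ite (starRingEnd ℂ), map_zero, map_inv₀, Complex.conj_natCast,
      mul_ite, ite_mul, mul_zero, zero_mul, ite_and, Finset.sum_ite_irrel, Finset.sum_const_zero,
      Finset.sum_ite_eq', mem_univ, if_true, if_pos rfl]
    simp only [Finset.sum_const, Finset.card_univ, ZMod.card, nsmul_eq_mul]
    field_simp
  · intro i j i' j'
    simp only [hψ, apply_ite (starRingEnd ℂ), map_zero, map_inv₀, Complex.conj_natCast,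
      mul_ite, ite_mul, mul_zero, zero_mul, ite_and, Finset.sum_ite_irrel, Finset.sum_const_zero,
      Finset.sum_ite_eq', mem_univ, if_true]
    rw [← ite_and, ← ite_and]
    refine if_congr ?_ hval rfl
    constructor
    · rintro ⟨h1, h2⟩
      exact ⟨by linear_combination h1 - 2 * h2, by linear_combination h2 - h1⟩
    · rintro ⟨rfl, rfl⟩; exact ⟨by ring, by ring⟩
  · intro i l i' l'
    simp only [hB, apply_ite (starRingEnd ℂ), map_zero, map_inv₀, Complex.conj_natCast,
      mul_ite, ite_mul, mul_zero, zero_mul, ite_and, Finset.sum_ite_irrel, Finset.sum_const_zero,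
      Finset.sum_ite_eq', mem_univ, if_true]
    rw [← ite_and, ← ite_and]
    refine if_congr ?_ hval rfl
    constructor
    · rintro ⟨h1, h2⟩
      have hi : i = i' := by linear_combination (-1 : ZMod k) * h2
      have hX : l' - i' = l - i := by linear_combination 2 * h1 + (l - i - l' + i') * h2t
      exact ⟨hi, by linear_combination (-1 : ZMod k) * hX + hi⟩
    · rintro ⟨rfl, rfl⟩; exact ⟨by ring, by ring⟩
  · intro i m i' m'
    simp only [hC, apply_ite (starRingEnd ℂ), map_zero, map_inv₀, Complex.conj_natCast,
      mul_ite, ite_mul, mul_zero, zero_mul, ite_and, Finset.sum_ite_irrel, Finset.sum_const_zero,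
      Finset.sum_ite_eq', mem_univ, if_true]
    rw [← ite_and, ← ite_and]
    refine if_congr ?_ hval rfl
    constructor
    · rintro ⟨h1, h2⟩
      exact ⟨by linear_combination 2 * h1 - h2, by linear_combination h1 - h2⟩
    · rintro ⟨rfl, rfl⟩; exact ⟨by ring, by ring⟩
  · intro j l j' l'
    simp only [hD, apply_ite (starRingEnd ℂ), map_zero, map_inv₀, Complex.conj_natCast,
      mul_ite, ite_mul, mul_zero, zero_mul, ite_and, Finset.sum_ite_irrel, Finset.sum_const_zero,
      Finset.sum_ite_eq', mem_univ, if_true]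
    rw [← ite_and, ← ite_and]
    refine if_congr ?_ hval rfl
    constructor
    · rintro ⟨h1, h2⟩
      exact ⟨by linear_combination h1 - h2, by linear_combination h1 - 2 * h2⟩
    · rintro ⟨rfl, rfl⟩; exact ⟨by ring, by ring⟩
  · intro j m j' m'
    simp only [hE, apply_ite (starRingEnd ℂ), map_zero, map_inv₀, Complex.conj_natCast,
      mul_ite, ite_mul, mul_zero, zero_mul, ite_and, Finset.sum_ite_irrel, Finset.sum_const_zero,
      Finset.sum_ite_eq', mem_univ, if_true]
    rw [← ite_and, ← ite_and]
    refine if_congr ?_ hval rfl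
    constructor
    · rintro ⟨h1, h2⟩
      exact ⟨(htwo j' j (by linear_combination h2 - h1)).symm,
        (htwo m' m (by linear_combination h2 + h1)).symm⟩
    · rintro ⟨rfl, rfl⟩; exact ⟨by ring, by ring⟩
  · intro l m l' m'
    simp only [hF, apply_ite (starRingEnd ℂ), map_zero, map_inv₀, Complex.conj_natCast,
      mul_ite, ite_mul, mul_zero, zero_mul, ite_and, Finset.sum_ite_irrel, Finset.sum_const_zero,
      Finset.sum_ite_eq', mem_univ, if_true]
    rw [← ite_and, ← ite_and]
    refine if_congr ?_ hval rfl
    constructor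
    · rintro ⟨h1, h2⟩
      exact ⟨by linear_combination (-1 : ZMod k) * h1 - 2 * h2,
        by linear_combination (-1 : ZMod k) * h1 - h2⟩
    · rintro ⟨rfl, rfl⟩; exact ⟨by ring, by ring⟩
end

section
/- Let H₁ and H₂ be finite-dimensional complex inner product spaces and V : H₁ → H₂ a linear isometry. Let 𝒢 be a set of unitary operators on H₂ that is projectively dense in the unitary group of H₂: for every unitary W on H₂ and every ε > 0 there exist g ∈ 𝒢 and c ∈ ℂ with |c| = 1 such that ‖c·g − W‖ < ε in operator norm. Then for every unitary U on H₁ and every ε > 0 there exist g ∈ 𝒢 and c ∈ ℂ with |c| = 1 such that ‖V† ∘ (c·g) ∘ V − U‖ < ε in operator norm, where V† is the adjoint of V. -/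
/-!
An isometry `V : H₁ → H₂` dilates every unitary `U` of `H₁` to the unitary
`W = V U V† + (1 - V V†)` of `H₂`, which acts as `U` on the range of `V` and as the identity on
its orthogonal complement, so that `V† W V = U`. Compression `A ↦ V† A V` is linear and does not
increase operator norms, so if `c • g` is `ε`-close to `W` then `V† (c • g) V` is `ε`-close to `U`.
-/

open ContinuousLinearMap

theorem IsStarProjection.add_one_sub_mem_unitary {R : Type*} [Ring R] [StarRing R] {p q : R}
    (hp : IsStarProjection p) (hqq : star q * q = p) (hqq' : q * star q = p)
    (hpq : p * q = q) (hqp : q * p = q) : q + (1 - p) ∈ unitary R := by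
  have hpp : p * p = p := hp.isIdempotentElem
  have hps : star p = p := hp.isSelfAdjoint
  have hpq' : p * star q = star q := by simpa [hps] using congrArg star hqp
  have hqp' : star q * p = star q := by simpa [hps] using congrArg star hpq
  have hstar : star (q + (1 - p)) = star q + (1 - p) := by simp [hps]
  rw [Unitary.mem_iff, hstar]
  constructor
  · calc (star q + (1 - p)) * (q + (1 - p))
          = star q * q + (star q - star q * p) + ((q - p * q) + (1 - p - p + p * p)) := by
            noncomm_ring
      _ = 1 := by rw [hqq, hqp', hpq, hpp]; abel
  · calc (q + (1 - p)) * (star q + (1 - p))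
          = q * star q + (q - q * p) + ((star q - p * star q) + (1 - p - p + p * p)) := by
            noncomm_ring
      _ = 1 := by rw [hqq', hqp, hpq', hpp]; abel

section Compression

variable {𝕜 E F : Type*} [RCLike 𝕜]
  [NormedAddCommGroup E] [InnerProductSpace 𝕜 E] [CompleteSpace E]
  [NormedAddCommGroup F] [InnerProductSpace 𝕜 F] [CompleteSpace F]
  {V : E →L[𝕜] F}

theorem adjoint_comp_comp_cancel_left (hV : adjoint V ∘L V = 1) {G : Type*}
    [NormedAddCommGroup G] [NormedSpace 𝕜 G] (X : G →L[𝕜] E) :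
    adjoint V ∘L (V ∘L X) = X := by
  rw [← comp_assoc, hV, one_def, id_comp]

theorem isStarProjection_self_comp_adjoint (hV : adjoint V ∘L V = 1) :
    IsStarProjection (V ∘L adjoint V) where
  isIdempotentElem := by
    rw [IsIdempotentElem, mul_def, comp_assoc, adjoint_comp_comp_cancel_left hV]
  isSelfAdjoint := by
    rw [IsSelfAdjoint, star_eq_adjoint, adjoint_comp, adjoint_adjoint]

theorem exists_mem_unitary_adjoint_comp_comp_eq (hV : adjoint V ∘L V = 1) {U : E →L[𝕜] E}
    (hU : U ∈ unitary (E →L[𝕜] E)) :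
    ∃ W ∈ unitary (F →L[𝕜] F), adjoint V ∘L (W ∘L V) = U := by
  have hU₁ : adjoint U ∘L U = 1 := Unitary.star_mul_self_of_mem hU
  have hU₂ : U ∘L adjoint U = 1 := Unitary.mul_star_self_of_mem hU
  have hstar : star (V ∘L U ∘L adjoint V) = V ∘L adjoint U ∘L adjoint V := by
    simp only [star_eq_adjoint, adjoint_comp, adjoint_adjoint, comp_assoc]
  refine ⟨V ∘L U ∘L adjoint V + (1 - V ∘L adjoint V),
    (isStarProjection_self_comp_adjoint hV).add_one_sub_mem_unitary ?_ ?_ ?_ ?_, ?_⟩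
  · rw [hstar, mul_def]
    simp only [comp_assoc, adjoint_comp_comp_cancel_left hV]
    rw [← comp_assoc (adjoint U), hU₁, one_def, id_comp]
  · rw [hstar, mul_def]
    simp only [comp_assoc, adjoint_comp_comp_cancel_left hV]
    rw [← comp_assoc U, hU₂, one_def, id_comp]
  · simp only [mul_def, comp_assoc, adjoint_comp_comp_cancel_left hV]
  · simp only [mul_def, comp_assoc, adjoint_comp_comp_cancel_left hV]
  · simp only [add_comp, sub_comp, comp_add, comp_sub, one_def, id_comp, comp_assoc,
      adjoint_comp_comp_cancel_left hV]
    rw [hV, sub_self, add_zero, one_def, comp_id]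

theorem norm_adjoint_comp_comp_le (hV : adjoint V ∘L V = 1) (A : F →L[𝕜] F) :
    ‖adjoint V ∘L (A ∘L V)‖ ≤ ‖A‖ := by
  have hV₁ : ‖V‖ ≤ 1 := V.opNorm_le_bound zero_le_one fun x => by
    rw [(norm_map_iff_adjoint_comp_self V).2 hV x, one_mul]
  calc ‖adjoint V ∘L (A ∘L V)‖ ≤ ‖adjoint V‖ * (‖A‖ * ‖V‖) :=
        (opNorm_comp_le _ _).trans (by gcongr; exact opNorm_comp_le _ _)
    _ ≤ 1 * (‖A‖ * 1) := by rw [LinearIsometryEquiv.norm_map]; gcongr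
    _ = ‖A‖ := by ring

end Compression

theorem stmt11_general {H₁ H₂ : Type*}
    [NormedAddCommGroup H₁] [InnerProductSpace ℂ H₁] [FiniteDimensional ℂ H₁]
    [NormedAddCommGroup H₂] [InnerProductSpace ℂ H₂] [FiniteDimensional ℂ H₂]
    (V : H₁ →L[ℂ] H₂) (hV : ∀ x, ‖V x‖ = ‖x‖)
    (𝒢 : Set (H₂ →L[ℂ] H₂))
    (hdense : ∀ W : H₂ →L[ℂ] H₂, adjoint W ∘L W = 1 → W ∘L adjoint W = 1 →
      ∀ ε > 0, ∃ g ∈ 𝒢, ∃ c : ℂ, ‖c‖ = 1 ∧ ‖c • g - W‖ < ε) :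
    ∀ U : H₁ →L[ℂ] H₁, adjoint U ∘L U = 1 → U ∘L adjoint U = 1 →
      ∀ ε > 0, ∃ g ∈ 𝒢, ∃ c : ℂ, ‖c‖ = 1 ∧
        ‖adjoint V ∘L ((c • g) ∘L V) - U‖ < ε := by
  intro U hU₁ hU₂ ε hε
  have hVV : adjoint V ∘L V = 1 := (norm_map_iff_adjoint_comp_self V).1 hV
  obtain ⟨W, hW, hWU⟩ :=
    exists_mem_unitary_adjoint_comp_comp_eq hVV (Unitary.mem_iff.2 ⟨hU₁, hU₂⟩)
  obtain ⟨g, hg, c, hc, hlt⟩ :=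
    hdense W (Unitary.star_mul_self_of_mem hW) (Unitary.mul_star_self_of_mem hW) ε hε
  refine ⟨g, hg, c, hc, ?_⟩
  calc ‖adjoint V ∘L ((c • g) ∘L V) - U‖ = ‖adjoint V ∘L ((c • g - W) ∘L V)‖ := by
        rw [sub_comp, comp_sub, hWU]
    _ ≤ ‖c • g - W‖ := norm_adjoint_comp_comp_le hVV _
    _ < ε := hlt

/-- Let `H₁`, `H₂` be finite-dimensional complex inner product spaces and
`V : H₁ → H₂` a linear isometry. Let `𝒢` be a set of unitary operators on `H₂` that is
projectively dense in the unitary group of `H₂`. Then for every unitary `U` on `H₁` and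
every `ε > 0` there are `g ∈ 𝒢` and a phase `c` with `‖V† ∘ (c • g) ∘ V - U‖ < ε`. -/
theorem stmt11 {H₁ H₂ : Type*}
    [NormedAddCommGroup H₁] [InnerProductSpace ℂ H₁] [FiniteDimensional ℂ H₁]
    [NormedAddCommGroup H₂] [InnerProductSpace ℂ H₂] [FiniteDimensional ℂ H₂]
    (V : H₁ →L[ℂ] H₂) (hV : ∀ x, ‖V x‖ = ‖x‖)
    (𝒢 : Set (H₂ →L[ℂ] H₂))
    (h𝒢 : ∀ g ∈ 𝒢, adjoint g ∘L g = 1 ∧ g ∘L adjoint g = 1)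
    (hdense : ∀ W : H₂ →L[ℂ] H₂, adjoint W ∘L W = 1 → W ∘L adjoint W = 1 →
      ∀ ε > 0, ∃ g ∈ 𝒢, ∃ c : ℂ, ‖c‖ = 1 ∧ ‖c • g - W‖ < ε) :
    ∀ U : H₁ →L[ℂ] H₁, adjoint U ∘L U = 1 → U ∘L adjoint U = 1 →
      ∀ ε > 0, ∃ g ∈ 𝒢, ∃ c : ℂ, ‖c‖ = 1 ∧
        ‖adjoint V ∘L ((c • g) ∘L V) - U‖ < ε :=
  stmt11_general V hV 𝒢 hdense
end
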